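/- arXiv:1301.6451 — 3 statements merged into one kernel-verified Lean document; each statement's English description precedes it below -/
import Mathlib

section
/- Let M be a loopless oriented matroid of rank 3 on E = {1,…,n} with chirotope χ, and let σ be a rotational symmetry of M of finite order a such that some element x satisfies χ(p, x, σ(x)) ≠ 0 for the element p below (i.e., σ is non-trivial: some x is not parallel to σ(x)). If σ(p) = p and σ(q) = q, then p and q are parallel or antiparallel, i.e., χ(p, q, x) = 0 for all x ∈ E. -/
/-
Contract at the fixed point `p`: the map `(z, w) ↦ χ(p, z, w)` orders the elements lying strictly
on one side of the line `pq` by angle, and this order is transitive by Grassmann–Plücker. If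
`χ(p, q, x) ≠ 0`, the whole `σ`-orbit of `x` stays on the side of `x`, and since
`χ(p, σⁿx, σⁿ⁺¹x) = χ(p, x, σx) ≠ 0` the orbit moves monotonically in that order, which is
impossible for a finite cycle. Hence `χ(p, q, x) = χ(p, q, σx) = 0` while `χ(p, x, σx) ≠ 0`,
and a final Grassmann–Plücker relation gives `χ(p, q, z) = 0` for every `z`.
-/

/-- Chirotope axioms (B1)-(B3) for a map `χ : E^r → {−1,0,1}` (values in ℤ). -/
def IsChirotope {E : Type*} {r : ℕ} (χ : (Fin r → E) → ℤ) : Prop :=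
  (∀ t, χ t = 1 ∨ χ t = 0 ∨ χ t = -1) ∧
  (∃ t, χ t ≠ 0) ∧
  (∀ (t : Fin r → E) (τ : Equiv.Perm (Fin r)), χ (t ∘ ⇑τ) = ((Equiv.Perm.sign τ : ℤˣ) : ℤ) * χ t) ∧
  (∀ (i₀ : Fin r) (x y : Fin r → E),
    (∀ s : Fin r, 0 ≤ χ (Function.update x i₀ (y s)) * χ (Function.update y s (x i₀))) →
    0 ≤ χ x * χ y)

/-- Cocircuits of the oriented matroid with chirotope `χ`: the nonzero sign vectors of the
form `x ↦ χ(t₁,…,x,…,t_r)`. -/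
def IsCocircuit {E : Type*} {r : ℕ} (χ : (Fin r → E) → ℤ) (c : E → ℤ) : Prop :=
  c ≠ 0 ∧ ∃ (i : Fin r) (t : Fin r → E), c = fun x => χ (Function.update t i x)

/-- Circuits of the oriented matroid with chirotope `χ`. -/
def IsCircuit {E : Type*} {r : ℕ} (χ : (Fin r → E) → ℤ) (c : E → ℤ) : Prop :=
  c ≠ 0 ∧ ∃ t : Fin (r + 1) → E,
    (∀ i, c (t i) = (-1) ^ (i : ℕ) * χ (fun j => t (i.succAbove j))) ∧
    (∀ x, (∀ i, t i ≠ x) → c x = 0)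

/-- Closure of a set of sign vectors under composition `X ∘ Y`. -/
inductive SignComp {E : Type*} (B : (E → ℤ) → Prop) : (E → ℤ) → Prop
  | zero : SignComp B 0
  | base (c : E → ℤ) : B c → SignComp B c
  | comp (X Y : E → ℤ) : SignComp B X → SignComp B Y →
      SignComp B (fun e => if X e = 0 then Y e else X e)

/-- Covectors: compositions of cocircuits. -/
def IsCovector {E : Type*} {r : ℕ} (χ : (Fin r → E) → ℤ) : (E → ℤ) → Prop :=
  SignComp (IsCocircuit χ)

/-- Vectors: compositions of circuits. -/
def IsVector {E : Type*} {r : ℕ} (χ : (Fin r → E) → ℤ) : (E → ℤ) → Prop :=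
  SignComp (IsCircuit χ)

/-- No loops: every element lies in some basis. -/
def OMLoopless {E : Type*} {r : ℕ} (χ : (Fin r → E) → ℤ) : Prop :=
  ∀ e : E, ∃ t, χ t ≠ 0 ∧ ∃ i, t i = e

/-- Simplicity: no loops and no two distinct parallel or antiparallel elements. -/
def OMSimple {E : Type*} {r : ℕ} (χ : (Fin r → E) → ℤ) : Prop :=
  OMLoopless χ ∧ ∀ e f : E, e ≠ f → ∃ t, χ t ≠ 0 ∧ ∃ i j, i ≠ j ∧ t i = e ∧ t j = f

/-- Acyclicity: existence of the all-positive covector. -/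
def OMAcyclic {E : Type*} {r : ℕ} (χ : (Fin r → E) → ℤ) : Prop :=
  ∃ X, IsCovector χ X ∧ ∀ e, X e = 1

/-- Extreme point of an acyclic oriented matroid. -/
def IsExtremePoint {E : Type*} {r : ℕ} (χ : (Fin r → E) → ℤ) (e : E) : Prop :=
  ∃ c, IsCocircuit χ c ∧ c e = 0 ∧ ∀ f, f ≠ e → c f = 1

/-- Rotational symmetry of the oriented matroid with chirotope `χ`. -/
def IsRotSym {E : Type*} {r : ℕ} (χ : (Fin r → E) → ℤ) (σ : Equiv.Perm E) : Prop :=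
  ∀ t, χ (⇑σ ∘ t) = χ t

def IsAlternatingSign {E : Type*} {r : ℕ} (χ : (Fin r → E) → ℤ) : Prop :=
  ∀ (t : Fin r → E) (τ : Equiv.Perm (Fin r)), χ (t ∘ ⇑τ) = ((Equiv.Perm.sign τ : ℤˣ) : ℤ) * χ t

def GrassmannPluckerSign {E : Type*} {r : ℕ} (χ : (Fin r → E) → ℤ) : Prop :=
  ∀ (i₀ : Fin r) (x y : Fin r → E),
    (∀ s : Fin r, 0 ≤ χ (Function.update x i₀ (y s)) * χ (Function.update y s (x i₀))) →
    0 ≤ χ x * χ y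

theorem IsChirotope.isAlternatingSign {E : Type*} {r : ℕ} {χ : (Fin r → E) → ℤ}
    (hχ : IsChirotope χ) : IsAlternatingSign χ :=
  hχ.2.2.1

theorem IsChirotope.grassmannPluckerSign {E : Type*} {r : ℕ} {χ : (Fin r → E) → ℤ}
    (hχ : IsChirotope χ) : GrassmannPluckerSign χ :=
  hχ.2.2.2

theorem Equiv.Perm.not_rel_apply_of_pow_eq_one {α : Type*} {r : α → α → Prop}
    (htrans : ∀ {x y z}, r x y → r y z → r x z) (hirrefl : ∀ x, ¬ r x x)
    {σ : Equiv.Perm α} (hmap : ∀ {x y}, r x y → r (σ x) (σ y))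
    {a : ℕ} (ha : 0 < a) (hσa : σ ^ a = 1) (x : α) : ¬ r x (σ x) := by
  intro hx
  have hchain : ∀ n : ℕ, r x ((σ ^ (n + 1)) x) := by
    intro n
    induction n with
    | zero => simpa using hx
    | succ n ih =>
      rw [pow_succ', Equiv.Perm.mul_apply]
      exact htrans hx (hmap ih)
  have := hchain (a - 1)
  rw [Nat.sub_add_cancel ha, hσa] at this
  exact hirrefl x this

theorem IsRotSym.apply_vec {E : Type*} {χ : (Fin 3 → E) → ℤ} {σ : Equiv.Perm E}
    (hrot : IsRotSym χ σ) (a b c : E) :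
    χ ![σ a, σ b, σ c] = χ ![a, b, c] := by
  rw [← hrot ![a, b, c]]
  congr 1
  ext i; fin_cases i <;> rfl

namespace Rank3

variable {E : Type*} {χ : (Fin 3 → E) → ℤ}

theorem update_vec₁ (a b c v : E) : Function.update ![a, b, c] 1 v = ![a, v, c] := by
  ext i; fin_cases i <;> rfl

theorem update_vec₂ (a b c v : E) : Function.update ![a, b, c] 2 v = ![a, b, v] := by
  ext i; fin_cases i <;> rfl

section Alternating

variable (hχ : IsAlternatingSign χ)
include hχ

theorem chi_swap₁₂ (a b c : E) : χ ![a, c, b] = -χ ![a, b, c] := by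
  have h := hχ ![a, b, c] (Equiv.swap 1 2)
  have ht : ![a, b, c] ∘ ⇑(Equiv.swap (1 : Fin 3) 2) = ![a, c, b] := by
    ext i; fin_cases i <;> rfl
  rw [ht, show ((Equiv.Perm.sign (Equiv.swap (1 : Fin 3) 2) : ℤˣ) : ℤ) = -1 by decide] at h
  linarith

theorem chi_eq_zero_of_eq₀₂ (a b : E) : χ ![a, b, a] = 0 := by
  have h := hχ ![a, b, a] (Equiv.swap 0 2)
  have ht : ![a, b, a] ∘ ⇑(Equiv.swap (0 : Fin 3) 2) = ![a, b, a] := by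
    ext i; fin_cases i <;> rfl
  rw [ht, show ((Equiv.Perm.sign (Equiv.swap (0 : Fin 3) 2) : ℤˣ) : ℤ) = -1 by decide] at h
  linarith

theorem chi_eq_zero_of_eq₁₂ (a b : E) : χ ![a, b, b] = 0 := by
  linarith [chi_swap₁₂ hχ a b b]

end Alternating

section GrassmannPlucker

variable (hχ : IsAlternatingSign χ) (hgp : GrassmannPluckerSign χ)
include hχ hgp

/-- Sign form of the three-term Grassmann–Plücker relation
`χ(abc) χ(ade) = χ(abd) χ(ace) - χ(abe) χ(acd)`. -/
theorem chi_mul_chi_nonneg (a b c d e : E) (h₁ : 0 ≤ χ ![a, b, d] * χ ![a, c, e])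
    (h₂ : χ ![a, b, e] * χ ![a, c, d] ≤ 0) : 0 ≤ χ ![a, b, c] * χ ![a, d, e] := by
  refine hgp 2 ![a, b, c] ![a, d, e] fun s => ?_
  fin_cases s
  · change 0 ≤ χ (Function.update ![a, b, c] 2 a) * χ (Function.update ![a, d, e] 0 c)
    simp [update_vec₂, chi_eq_zero_of_eq₀₂ hχ]
  · change 0 ≤ χ (Function.update ![a, b, c] 2 d) * χ (Function.update ![a, d, e] 1 c)
    rwa [update_vec₂, update_vec₁]
  · change 0 ≤ χ (Function.update ![a, b, c] 2 e) * χ (Function.update ![a, d, e] 2 c)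
    rw [update_vec₂, update_vec₂, chi_swap₁₂ hχ a c d, mul_neg]
    linarith

theorem chi_eq_zero_of_basis {p q x y : E} (hx : χ ![p, q, x] = 0) (hy : χ ![p, q, y] = 0)
    (hxy : χ ![p, x, y] ≠ 0) (z : E) : χ ![p, q, z] = 0 := by
  have hxq : χ ![p, x, q] = 0 := by rw [chi_swap₁₂ hχ, hx, neg_zero]
  have hyq : χ ![p, y, q] = 0 := by rw [chi_swap₁₂ hχ, hy, neg_zero]
  have h₁ := chi_mul_chi_nonneg hχ hgp p x y q z (by simp [hxq]) (by simp [hyq])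
  have h₂ := chi_mul_chi_nonneg hχ hgp p y x q z (by simp [hyq]) (by simp [hxq])
  rw [chi_swap₁₂ hχ p x y] at h₂
  have : χ ![p, x, y] * χ ![p, q, z] = 0 := by linarith
  exact (mul_eq_zero.mp this).resolve_left hxy

end GrassmannPlucker

/-- `HalfPlaneLT χ p q z w`: in the contraction at `p`, the elements `z` and `w` lie strictly on
the same side of `q`, and `w` comes after `z` when turning away from `q`. -/
def HalfPlaneLT (χ : (Fin 3 → E) → ℤ) (p q z w : E) : Prop :=
  χ ![p, q, z] = χ ![p, q, w] ∧ 0 < χ ![p, q, z] * χ ![p, z, w]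

theorem HalfPlaneLT.irrefl (hχ : IsAlternatingSign χ) (p q z : E) :
    ¬ HalfPlaneLT χ p q z z := by
  rintro ⟨-, h⟩
  simp [chi_eq_zero_of_eq₁₂ hχ] at h

theorem HalfPlaneLT.trans (hχ : IsAlternatingSign χ) (hgp : GrassmannPluckerSign χ)
    {p q z w v : E} (hzw : HalfPlaneLT χ p q z w) (hwv : HalfPlaneLT χ p q w v) :
    HalfPlaneLT χ p q z v := by
  obtain ⟨hz, hzw⟩ := hzw
  obtain ⟨hw, hwv⟩ := hwv
  refine ⟨hz.trans hw, ?_⟩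
  have hnonneg : 0 ≤ χ ![p, q, w] * χ ![p, z, v] :=
    chi_mul_chi_nonneg hχ hgp p q w z v (by rw [hz]; exact hwv.le)
      (by rw [chi_swap₁₂ hχ p z w, ← hw, ← hz, mul_neg]; linarith)
  rw [← hz] at hnonneg
  refine lt_of_le_of_ne hnonneg fun hzero => ?_
  have hzv : χ ![p, z, v] = 0 :=
    (mul_eq_zero.mp hzero.symm).resolve_left fun h => by simp [h] at hzw
  -- `χ(p, z, v) = 0` puts `z` and `v` on a common line through `p`, which `w` cannot separate.
  have := chi_mul_chi_nonneg hχ hgp p z w v q (by simp [hzv])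
    (by rw [chi_swap₁₂ hχ p q z, hz]; linarith)
  rw [chi_swap₁₂ hχ p q v, ← hw, ← hz] at this
  linarith

theorem HalfPlaneLT.map {σ : Equiv.Perm E} (hrot : IsRotSym χ σ) {p q : E} (hp : σ p = p)
    (hq : σ q = q) {z w : E} (h : HalfPlaneLT χ p q z w) : HalfPlaneLT χ p q (σ z) (σ w) := by
  have hinv : ∀ a b, χ ![p, σ a, σ b] = χ ![p, a, b] := fun a b => by
    conv_lhs => rw [← hp]
    exact hrot.apply_vec p a b
  rw [HalfPlaneLT, ← hq, hinv, hinv, hinv]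
  exact h

theorem HalfPlaneLT.not_apply_of_pow_eq_one (hχ : IsAlternatingSign χ)
    (hgp : GrassmannPluckerSign χ) {σ : Equiv.Perm E} (hrot : IsRotSym χ σ) {p q : E}
    (hp : σ p = p) (hq : σ q = q) {a : ℕ} (ha : 0 < a) (hσa : σ ^ a = 1) (x : E) :
    ¬ HalfPlaneLT χ p q x (σ x) ∧ ¬ HalfPlaneLT χ p q (σ x) x :=
  ⟨Equiv.Perm.not_rel_apply_of_pow_eq_one (fun h h' => h.trans hχ hgp h')
      (HalfPlaneLT.irrefl hχ p q) (HalfPlaneLT.map hrot hp hq) ha hσa x,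
    Equiv.Perm.not_rel_apply_of_pow_eq_one (r := fun z w => HalfPlaneLT χ p q w z)
      (fun h h' => h'.trans hχ hgp h) (HalfPlaneLT.irrefl hχ p q) (HalfPlaneLT.map hrot hp hq)
      ha hσa x⟩

end Rank3

open Rank3 in
theorem fixed_points_of_nontrivial_rank3_rotation_parallel_general
    {E : Type*} (χ : (Fin 3 → E) → ℤ) (hχ : IsChirotope χ)
    (σ : Equiv.Perm E) (hrot : IsRotSym χ σ)
    (a : ℕ) (ha : 0 < a) (hσa : σ ^ a = 1)
    (p q : E) (hp : σ p = p) (hq : σ q = q)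
    (hnontriv : ∃ x : E, χ ![p, x, σ x] ≠ 0) :
    ∀ x : E, χ ![p, q, x] = 0 := by
  have halt := hχ.isAlternatingSign
  have hgp := hχ.grassmannPluckerSign
  obtain ⟨x, hx⟩ := hnontriv
  have horbit : χ ![p, q, σ x] = χ ![p, q, x] := by
    simpa only [hp, hq] using hrot.apply_vec p q x
  obtain ⟨hforward, hbackward⟩ :=
    HalfPlaneLT.not_apply_of_pow_eq_one halt hgp hrot hp hq ha hσa x
  have hpqx : χ ![p, q, x] = 0 := by
    by_contra hu
    rcases (mul_ne_zero hu hx).lt_or_gt with hneg | hpos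
    · refine hbackward ⟨horbit, ?_⟩
      rw [horbit, chi_swap₁₂ halt p x (σ x), mul_neg]
      linarith
    · exact hforward ⟨horbit.symm, hpos⟩
  exact chi_eq_zero_of_basis halt hgp hpqx (by rw [horbit, hpqx]) hx

/-- Uniqueness of fixed points for non-trivial rotational symmetries of loopless rank-3
oriented matroids: if `σ` is a rotational symmetry of finite order `a` which is
non-trivial (some `x` satisfies `χ(p,x,σx) ≠ 0`) and `σ` fixes `p` and `q`, then `p`
and `q` are parallel or antiparallel, i.e. `χ(p,q,x) = 0` for all `x`. -/
theorem fixed_points_of_nontrivial_rank3_rotation_parallel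
    {E : Type*} (χ : (Fin 3 → E) → ℤ) (hχ : IsChirotope χ)
    (hloopless : ∀ e : E, ∃ x y : E, χ ![e, x, y] ≠ 0)
    (σ : Equiv.Perm E) (hrot : IsRotSym χ σ)
    (a : ℕ) (ha : 0 < a) (hσa : σ ^ a = 1)
    (p q : E) (hp : σ p = p) (hq : σ q = q)
    (hnontriv : ∃ x : E, χ ![p, x, σ x] ≠ 0) :
    ∀ x : E, χ ![p, q, x] = 0 :=
  fixed_points_of_nontrivial_rank3_rotation_parallel_general χ hχ σ hrot a ha hσa p q hp hq hnontriv
end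

section
/- Let N be a rank-3 simple oriented matroid on F = {1,…,m} with m ≥ 5 such that both restrictions N|_{F∖{1}} and N|_{F∖{m}} are rank-3 matroid polytopes. Then N is acyclic. -/
/-!
A nonzero nonnegative vector is a composition of circuits, so it yields a nonnegative circuit.
In rank 3 such a circuit is supported on four elements. If it misses the first or the last
element, it lives in an alternating matroid, where the signs of the circuit on four points in
cyclic order alternate. Otherwise it is supported on the first element `e`, the last element `f`
and two more elements `u, v`. Since `m ≥ 5` there is a fifth element `z`; its position with
respect to `f, u, v` in the first cyclic order and to `e, u, v` in the second leaves nine cases,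
and each of them violates one of four three-term Grassmann–Plücker relations among
`e, f, u, v, z`.
-/

def altSign (x y z : ℕ) : ℤ :=
  if (x < y ∧ y < z) ∨ (y < z ∧ z < x) ∨ (z < x ∧ x < y) then 1 else -1

theorem altSign_eq_one_or_eq_neg_one (x y z : ℕ) : altSign x y z = 1 ∨ altSign x y z = -1 := by
  unfold altSign; split_ifs <;> simp

theorem altSign_fourth_cases {a b c d : ℕ} (hac : a ≠ c) (hbd : b ≠ d) :
    (altSign a b d = altSign a b c ∧ altSign a c d = altSign a b c ∧
        altSign b c d = altSign a b c) ∨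
      (altSign a b d = altSign a b c ∧ altSign a c d = -altSign a b c ∧
        altSign b c d = -altSign a b c) ∨
      (altSign a b d = -altSign a b c ∧ altSign a c d = -altSign a b c ∧
        altSign b c d = altSign a b c) := by
  unfold altSign; split_ifs <;> omega

theorem not_altSign_nonneg_circuit (a b c d : ℕ) :
    ¬(0 ≤ altSign b c d ∧ altSign a c d ≤ 0 ∧ 0 ≤ altSign a b d ∧ altSign a b c ≤ 0) := by
  unfold altSign; split_ifs <;> omega

namespace IsChirotope

variable {E : Type*} {χ : (Fin 3 → E) → ℤ}

theorem apply_swap01 (hχ : IsChirotope χ) (a b c : E) : χ ![b, a, c] = -χ ![a, b, c] := by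
  have h := hχ.2.2.1 ![a, b, c] (Equiv.swap 0 1)
  rw [Equiv.Perm.sign_swap (by decide)] at h
  convert h using 2
  · ext i; fin_cases i <;> rfl
  · simp

theorem apply_swap12 (hχ : IsChirotope χ) (a b c : E) : χ ![a, c, b] = -χ ![a, b, c] := by
  have h := hχ.2.2.1 ![a, b, c] (Equiv.swap 1 2)
  rw [Equiv.Perm.sign_swap (by decide)] at h
  convert h using 2
  · ext i; fin_cases i <;> rfl
  · simp

theorem apply_rotate (hχ : IsChirotope χ) (a b c : E) : χ ![b, c, a] = χ ![a, b, c] := by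
  rw [hχ.apply_swap12 b a c, hχ.apply_swap01, neg_neg]

theorem apply_self_left (hχ : IsChirotope χ) (a b : E) : χ ![a, a, b] = 0 := by
  have := hχ.apply_swap01 a a b
  omega

theorem grassmann_plucker (hχ : IsChirotope χ) (e a b f c d : E)
    (h₀ : 0 ≤ χ ![f, a, b] * χ ![e, c, d]) (h₁ : 0 ≤ χ ![c, a, b] * χ ![f, e, d])
    (h₂ : 0 ≤ χ ![d, a, b] * χ ![f, c, e]) : 0 ≤ χ ![e, a, b] * χ ![f, c, d] := by
  refine hχ.2.2.2 0 ![e, a, b] ![f, c, d] fun s => ?_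
  fin_cases s
  · convert h₀ using 3 <;> ext i <;> fin_cases i <;> rfl
  · convert h₁ using 3 <;> ext i <;> fin_cases i <;> rfl
  · convert h₂ using 3 <;> ext i <;> fin_cases i <;> rfl

theorem three_term_grassmann_plucker_nonneg (hχ : IsChirotope χ) (e f a b d : E)
    (h₀ : 0 ≤ χ ![f, a, b] * χ ![e, a, d]) (h₁ : 0 ≤ χ ![a, b, d] * χ ![e, f, a]) :
    0 ≤ χ ![e, a, b] * χ ![f, a, d] := by
  refine hχ.grassmann_plucker e a b f a d h₀ (by rw [hχ.apply_self_left, zero_mul]) ?_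
  rwa [← hχ.apply_rotate d a b, hχ.apply_rotate e f a]

theorem three_term_grassmann_plucker_nonpos (hχ : IsChirotope χ) (e f a b d : E)
    (h₀ : χ ![f, a, b] * χ ![e, a, d] ≤ 0) (h₁ : χ ![a, b, d] * χ ![e, f, a] ≤ 0) :
    χ ![e, a, b] * χ ![f, a, d] ≤ 0 := by
  have h := hχ.grassmann_plucker e a b f d a
    (by rw [hχ.apply_swap12 e a d]; linarith)
    (by rw [← hχ.apply_rotate d a b, hχ.apply_swap01 e f a]; linarith)
    (by rw [hχ.apply_self_left, zero_mul])
  rw [hχ.apply_swap12 f a d] at h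
  linarith

end IsChirotope

/-- On `S`, `χ` is the alternating chirotope of the order `g`: the restriction to `S` is a rank-3
matroid polytope, relabeled so that its elements appear in the cyclic order given by `g`. -/
def IsAlternatingOn {E : Type*} (χ : (Fin 3 → E) → ℤ) (g : E → ℕ) (S : Set E) : Prop :=
  S.InjOn g ∧ ∀ x ∈ S, ∀ y ∈ S, ∀ z ∈ S, g x < g y → g y < g z → χ ![x, y, z] = 1

namespace IsAlternatingOn

variable {E : Type*} {χ : (Fin 3 → E) → ℤ} {g : E → ℕ} {S : Set E} {a b c d : E}

theorem apply_eq_altSign (hS : IsAlternatingOn χ g S) (hχ : IsChirotope χ)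
    (ha : a ∈ S) (hb : b ∈ S) (hc : c ∈ S) (hab : a ≠ b) (hac : a ≠ c) (hbc : b ≠ c) :
    χ ![a, b, c] = altSign (g a) (g b) (g c) := by
  have hgab : g a ≠ g b := fun h => hab (hS.1 ha hb h)
  have hgac : g a ≠ g c := fun h => hac (hS.1 ha hc h)
  have hgbc : g b ≠ g c := fun h => hbc (hS.1 hb hc h)
  have inc := hS.2
  unfold altSign
  rcases hgab.lt_or_gt with h₁ | h₁ <;> rcases hgac.lt_or_gt with h₂ | h₂ <;>
    rcases hgbc.lt_or_gt with h₃ | h₃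
  · rw [if_pos (by omega), inc a ha b hb c hc h₁ h₃]
  · rw [if_neg (by omega), hχ.apply_swap12 a c b, inc a ha c hc b hb h₂ h₃]
  · omega
  · rw [if_pos (by omega), hχ.apply_rotate c a b, inc c hc a ha b hb h₂ h₁]
  · rw [if_neg (by omega), hχ.apply_swap01 b a c, inc b hb a ha c hc h₁ h₂]
  · omega
  · rw [if_pos (by omega), ← hχ.apply_rotate a b c, inc b hb c hc a ha h₃ h₂]
  · rw [if_neg (by omega), hχ.apply_swap01 b a c, hχ.apply_rotate c b a,
      inc c hc b hb a ha h₃ h₁]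

theorem apply_eq_one_or_eq_neg_one (hS : IsAlternatingOn χ g S) (hχ : IsChirotope χ)
    (ha : a ∈ S) (hb : b ∈ S) (hc : c ∈ S) (hab : a ≠ b) (hac : a ≠ c) (hbc : b ≠ c) :
    χ ![a, b, c] = 1 ∨ χ ![a, b, c] = -1 := by
  rw [hS.apply_eq_altSign hχ ha hb hc hab hac hbc]
  exact altSign_eq_one_or_eq_neg_one _ _ _

theorem fourth_point_cases (hS : IsAlternatingOn χ g S) (hχ : IsChirotope χ)
    (ha : a ∈ S) (hb : b ∈ S) (hc : c ∈ S) (hd : d ∈ S)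
    (hab : a ≠ b) (hac : a ≠ c) (had : a ≠ d) (hbc : b ≠ c) (hbd : b ≠ d) (hcd : c ≠ d) :
    (χ ![a, b, d] = χ ![a, b, c] ∧ χ ![a, c, d] = χ ![a, b, c] ∧ χ ![b, c, d] = χ ![a, b, c]) ∨
      (χ ![a, b, d] = χ ![a, b, c] ∧ χ ![a, c, d] = -χ ![a, b, c] ∧
        χ ![b, c, d] = -χ ![a, b, c]) ∨
      (χ ![a, b, d] = -χ ![a, b, c] ∧ χ ![a, c, d] = -χ ![a, b, c] ∧
        χ ![b, c, d] = χ ![a, b, c]) := by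
  simp only [hS.apply_eq_altSign hχ ha hb hc hab hac hbc,
    hS.apply_eq_altSign hχ ha hb hd hab had hbd, hS.apply_eq_altSign hχ ha hc hd hac had hcd,
    hS.apply_eq_altSign hχ hb hc hd hbc hbd hcd]
  exact altSign_fourth_cases (fun h => hac (hS.1 ha hc h)) (fun h => hbd (hS.1 hb hd h))

end IsAlternatingOn

/-- By Cramer's rule the circuit supported on `a, b, c, d` has signs
`χ(b,c,d), -χ(a,c,d), χ(a,b,d), -χ(a,b,c)`; here they are nonnegative and not all zero. -/
def IsNonnegCircuit {E : Type*} (χ : (Fin 3 → E) → ℤ) (a b c d : E) : Prop :=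
  0 ≤ χ ![b, c, d] ∧ χ ![a, c, d] ≤ 0 ∧ 0 ≤ χ ![a, b, d] ∧ χ ![a, b, c] ≤ 0 ∧
    (χ ![b, c, d] ≠ 0 ∨ χ ![a, c, d] ≠ 0 ∨ χ ![a, b, d] ≠ 0 ∨ χ ![a, b, c] ≠ 0)

namespace IsNonnegCircuit

variable {E : Type*} {χ : (Fin 3 → E) → ℤ} {a b c d : E}

theorem rotate (h : IsNonnegCircuit χ a b c d) (hχ : IsChirotope χ) :
    IsNonnegCircuit χ b c a d := by
  have := hχ.apply_swap01 a c d
  have := hχ.apply_swap01 a b d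
  have := hχ.apply_rotate a b c
  unfold IsNonnegCircuit at *
  omega

theorem swap (h : IsNonnegCircuit χ a b c d) (hχ : IsChirotope χ) :
    IsNonnegCircuit χ b a d c := by
  have := hχ.apply_swap12 a c d
  have := hχ.apply_swap12 b c d
  have := hχ.apply_swap01 a b c
  have := hχ.apply_swap01 a b d
  unfold IsNonnegCircuit at *
  omega

theorem ne (h : IsNonnegCircuit χ a b c d) (hχ : IsChirotope χ) : a ≠ b := by
  rintro rfl
  have := hχ.apply_self_left a c
  have := hχ.apply_self_left a d
  unfold IsNonnegCircuit at h
  omega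

/-- The even permutations of `a, b, c, d` preserve the circuit signs and act transitively on
ordered pairs. -/
theorem exists_of_mem (h : IsNonnegCircuit χ a b c d) (hχ : IsChirotope χ) {x y : E}
    (hx : x ∈ ({a, b, c, d} : Set E)) (hy : y ∈ ({a, b, c, d} : Set E)) (hxy : x ≠ y) :
    ∃ u v, IsNonnegCircuit χ x y u v := by
  have r := fun {a b c d} (h : IsNonnegCircuit χ a b c d) => h.rotate hχ
  have s := fun {a b c d} (h : IsNonnegCircuit χ a b c d) => h.swap hχ
  rcases hx with rfl | rfl | rfl | rfl <;> rcases hy with rfl | rfl | rfl | rfl <;>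
    first
    | exact absurd rfl hxy
    | exact ⟨_, _, h⟩
    | exact ⟨_, _, r h⟩
    | exact ⟨_, _, r (r h)⟩
    | exact ⟨_, _, s h⟩
    | exact ⟨_, _, s (r h)⟩
    | exact ⟨_, _, r (s h)⟩
    | exact ⟨_, _, r (r (s h))⟩
    | exact ⟨_, _, s (r (r h))⟩
    | exact ⟨_, _, s (r (s h))⟩
    | exact ⟨_, _, s (r (r (s h)))⟩
    | exact ⟨_, _, r (s (r (r h)))⟩
    | exact ⟨_, _, s (r (s (r (r h))))⟩

theorem pairwise_ne (h : IsNonnegCircuit χ a b c d) (hχ : IsChirotope χ) :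
    a ≠ b ∧ a ≠ c ∧ a ≠ d ∧ b ≠ c ∧ b ≠ d ∧ c ≠ d :=
  ⟨h.ne hχ, (((h.rotate hχ).rotate hχ).swap hχ).ne hχ, ((h.swap hχ).rotate hχ).ne hχ,
    (h.rotate hχ).ne hχ, ((((h.swap hχ).rotate hχ).rotate hχ).swap hχ).ne hχ,
    ((((h.rotate hχ).rotate hχ).swap hχ).rotate hχ).ne hχ⟩

end IsNonnegCircuit

theorem SignComp.exists_nonneg {E : Type*} {B : (E → ℤ) → Prop} {X : E → ℤ}
    (hX : SignComp B X) (hX0 : X ≠ 0) (hXnonneg : 0 ≤ X) : ∃ c, B c ∧ 0 ≤ c := by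
  induction hX with
  | zero => exact absurd rfl hX0
  | base c hc => exact ⟨c, hc, hXnonneg⟩
  | comp X Y _ _ ihX ihY =>
    by_cases hX : X = 0
    · subst hX
      exact ihY (by simpa using hX0) (by simpa using hXnonneg)
    · refine ihX hX fun e => ?_
      have := hXnonneg e
      simp only [Pi.zero_apply] at this ⊢
      split_ifs at this with h <;> omega

theorem IsCircuit.exists_isNonnegCircuit {E : Type*} {χ : (Fin 3 → E) → ℤ} {X : E → ℤ}
    (hX : IsCircuit χ X) (hX0 : 0 ≤ X) : ∃ a b c d, IsNonnegCircuit χ a b c d := by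
  obtain ⟨hne, t, ht, hout⟩ := hX
  have entry : ∀ (i : Fin 4) (w : Fin 3 → E), (fun j => t (i.succAbove j)) = w →
      X (t i) = (-1) ^ (i : ℕ) * χ w := fun i w hw => hw ▸ ht i
  have h₀ : X (t 0) = χ ![t 1, t 2, t 3] :=
    (entry 0 ![t 1, t 2, t 3] (by ext j; fin_cases j <;> rfl)).trans (by norm_num)
  have h₁ : X (t 1) = -χ ![t 0, t 2, t 3] :=
    (entry 1 ![t 0, t 2, t 3] (by ext j; fin_cases j <;> rfl)).trans (by norm_num)
  have h₂ : X (t 2) = χ ![t 0, t 1, t 3] :=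
    (entry 2 ![t 0, t 1, t 3] (by ext j; fin_cases j <;> rfl)).trans (by norm_num)
  have h₃ : X (t 3) = -χ ![t 0, t 1, t 2] :=
    (entry 3 ![t 0, t 1, t 2] (by ext j; fin_cases j <;> rfl)).trans (by norm_num)
  obtain ⟨x, hx⟩ := Function.ne_iff.mp hne
  obtain ⟨i, rfl⟩ : ∃ i, t i = x := by
    by_contra! h
    exact hx (hout x h)
  have hnn : ∀ k, 0 ≤ X (t k) := fun k => hX0 (t k)
  have := hnn 0; have := hnn 1; have := hnn 2; have := hnn 3
  refine ⟨t 0, t 1, t 2, t 3, by omega, by omega, by omega, by omega, ?_⟩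
  rcases (by decide : ∀ k : Fin 4, k = 0 ∨ k = 1 ∨ k = 2 ∨ k = 3) i with rfl | rfl | rfl | rfl <;>
    simp only [Pi.zero_apply] at hx <;> omega

theorem exists_ne_of_four_lt_card {α : Type*} [Fintype α] [DecidableEq α]
    (h : 4 < Fintype.card α) (a b c d : α) : ∃ z, z ≠ a ∧ z ≠ b ∧ z ≠ c ∧ z ≠ d := by
  obtain ⟨z, -, hz⟩ := Finset.exists_mem_notMem_of_card_lt_card
    ((Finset.card_le_four (a := a) (b := b) (c := c) (d := d)).trans_lt h)
  simp only [Finset.mem_insert, Finset.mem_singleton, not_or] at hz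
  exact ⟨z, hz⟩

section Deletions

variable {E : Type*} {χ : (Fin 3 → E) → ℤ} {S : Set E} {g g₁ g₂ : E → ℕ}

theorem IsAlternatingOn.not_isNonnegCircuit (hS : IsAlternatingOn χ g S) (hχ : IsChirotope χ)
    {a b c d : E} (hsub : {a, b, c, d} ⊆ S) : ¬IsNonnegCircuit χ a b c d := by
  intro h
  obtain ⟨hab, hac, had, hbc, hbd, hcd⟩ := h.pairwise_ne hχ
  have ha : a ∈ S := hsub (by simp)
  have hb : b ∈ S := hsub (by simp)
  have hc : c ∈ S := hsub (by simp)
  have hd : d ∈ S := hsub (by simp)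
  obtain ⟨h₁, h₂, h₃, h₄, -⟩ := h
  rw [hS.apply_eq_altSign hχ hb hc hd hbc hbd hcd] at h₁
  rw [hS.apply_eq_altSign hχ ha hc hd hac had hcd] at h₂
  rw [hS.apply_eq_altSign hχ ha hb hd hab had hbd] at h₃
  rw [hS.apply_eq_altSign hχ ha hb hc hab hac hbc] at h₄
  exact not_altSign_nonneg_circuit _ _ _ _ ⟨h₁, h₂, h₃, h₄⟩

theorem not_isNonnegCircuit_of_isAlternatingOn_deletions (hχ : IsChirotope χ) {e f u v z : E}
    (h₁ : IsAlternatingOn χ g₁ {x | x ≠ e}) (h₂ : IsAlternatingOn χ g₂ {x | x ≠ f})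
    (hze : z ≠ e) (hzf : z ≠ f) (hzu : z ≠ u) (hzv : z ≠ v) : ¬IsNonnegCircuit χ e f u v := by
  intro h
  obtain ⟨hef, heu, hev, hfu, hfv, huv⟩ := h.pairwise_ne hχ
  obtain ⟨hfuv, heuv, hefv, hefu, -⟩ := h
  replace hfuv : χ ![f, u, v] = 1 := by
    have := h₁.apply_eq_one_or_eq_neg_one hχ hef.symm heu.symm hev.symm hfu hfv huv
    omega
  replace heuv : χ ![e, u, v] = -1 := by
    have := h₂.apply_eq_one_or_eq_neg_one hχ hef hfu.symm hfv.symm heu hev huv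
    omega
  have c₁ := h₁.fourth_point_cases hχ hef.symm heu.symm hev.symm hze hfu hfv hzf.symm huv
    hzu.symm hzv.symm
  have c₂ := h₂.fourth_point_cases hχ hef hfu.symm hfv.symm hzf heu hev hze.symm huv
    hzu.symm hzv.symm
  rw [hfuv] at c₁
  rw [heuv] at c₂
  have gp₁ := hχ.three_term_grassmann_plucker_nonneg e f u v z
  have gp₂ := hχ.three_term_grassmann_plucker_nonpos e f u v z
  have gp₃ := hχ.three_term_grassmann_plucker_nonneg e f v u z
  have gp₄ := hχ.three_term_grassmann_plucker_nonpos e f v u z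
  simp only [hχ.apply_swap12 f u v, hχ.apply_swap01 u v z, hχ.apply_swap12 e u v] at gp₃ gp₄
  rcases c₁ with ⟨k₁, k₂, k₃⟩ | ⟨k₁, k₂, k₃⟩ | ⟨k₁, k₂, k₃⟩ <;>
    rcases c₂ with ⟨l₁, l₂, l₃⟩ | ⟨l₁, l₂, l₃⟩ | ⟨l₁, l₂, l₃⟩ <;>
    simp only [hfuv, heuv, k₁, k₂, k₃, l₁, l₂] at gp₁ gp₂ gp₃ gp₄ <;>
    omega

end Deletions

/-- If `N` is a simple rank-3 oriented matroid on `{0,…,m−1}` (`m ≥ 5`) such that the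
restrictions obtained by deleting the first and the last element are rank-3 matroid
polytopes (i.e. relabelings of alternating matroids), then `N` is acyclic: it has no
nonzero nonnegative vector. -/
theorem rank3_with_two_polytope_deletions_is_acyclic
    (m : ℕ) (hm : 5 ≤ m)
    (χ : (Fin 3 → Fin m) → ℤ) (hχ : IsChirotope χ)
    (h1 : ∃ g : Fin m → ℕ, Set.InjOn g {x : Fin m | x ≠ ⟨0, by omega⟩} ∧
        ∀ x y z : Fin m, x ≠ ⟨0, by omega⟩ → y ≠ ⟨0, by omega⟩ → z ≠ ⟨0, by omega⟩ →
          g x < g y → g y < g z → χ ![x, y, z] = 1)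
    (h2 : ∃ g : Fin m → ℕ, Set.InjOn g {x : Fin m | x ≠ ⟨m - 1, by omega⟩} ∧
        ∀ x y z : Fin m, x ≠ ⟨m - 1, by omega⟩ → y ≠ ⟨m - 1, by omega⟩ →
          z ≠ ⟨m - 1, by omega⟩ → g x < g y → g y < g z → χ ![x, y, z] = 1) :
    ¬∃ v : Fin m → ℤ, IsVector χ v ∧ v ≠ 0 ∧ ∀ e : Fin m, 0 ≤ v e := by
  rintro ⟨v, hv, hv0, hvnonneg⟩
  obtain ⟨X, hX, hX0⟩ := hv.exists_nonneg hv0 hvnonneg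
  obtain ⟨a, b, c, d, hcirc⟩ := hX.exists_isNonnegCircuit hX0
  set e₀ : Fin m := ⟨0, by omega⟩
  set e₁ : Fin m := ⟨m - 1, by omega⟩
  obtain ⟨g₁, hinj₁, halt₁⟩ := h1
  obtain ⟨g₂, hinj₂, halt₂⟩ := h2
  have hS₁ : IsAlternatingOn χ g₁ {x | x ≠ e₀} :=
    ⟨hinj₁, fun x hx y hy z hz => halt₁ x y z hx hy hz⟩
  have hS₂ : IsAlternatingOn χ g₂ {x | x ≠ e₁} :=
    ⟨hinj₂, fun x hx y hy z hz => halt₂ x y z hx hy hz⟩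
  by_cases he₀ : e₀ ∈ ({a, b, c, d} : Set (Fin m))
  swap
  · exact hS₁.not_isNonnegCircuit hχ (fun x hx (hxe : x = e₀) => he₀ (hxe ▸ hx)) hcirc
  by_cases he₁ : e₁ ∈ ({a, b, c, d} : Set (Fin m))
  swap
  · exact hS₂.not_isNonnegCircuit hχ (fun x hx (hxe : x = e₁) => he₁ (hxe ▸ hx)) hcirc
  have he₀₁ : e₀ ≠ e₁ := by simp only [e₀, e₁, ne_eq, Fin.mk.injEq]; omega
  obtain ⟨u, w, hcirc'⟩ := hcirc.exists_of_mem hχ he₀ he₁ he₀₁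
  obtain ⟨z, hz₀, hz₁, hzu, hzw⟩ :=
    exists_ne_of_four_lt_card (by rw [Fintype.card_fin]; omega) e₀ e₁ u w
  exact not_isNonnegCircuit_of_isAlternatingOn_deletions hχ hS₁ hS₂ hz₀ hz₁ hzu hzw hcirc'
end

section
/- Every group of order 12 is isomorphic to one of C₁₂, C₂ × C₆, D₁₂, A₄, or Q₁₂ (the dicyclic group of order 12). -/
open Subgroup

private lemma pow_zmod_val_add {G : Type*} [Group G] {n : ℕ} [NeZero n] {g : G}
    (hg : orderOf g = n) (i j : ZMod n) :
    g ^ (i + j).val = g ^ i.val * g ^ j.val := by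
  rw [← pow_add, ZMod.val_add, pow_eq_pow_iff_modEq, hg]
  exact Nat.mod_modEq _ n

private lemma cyc12 {G : Type*} [Group G] (h : Nat.card G = 12) (g : G)
    (hg : orderOf g = 12) : Nonempty (G ≃* Multiplicative (ZMod 12)) := by
  have : Finite G := Nat.finite_of_card_ne_zero (by omega)
  let f : Multiplicative (ZMod 12) →* G :=
    MonoidHom.mk' (fun x => g ^ (Multiplicative.toAdd x).val)
      (fun a b => pow_zmod_val_add hg _ _)
  have hinj : Function.Injective f := by
    intro x y hxy
    have hx1 : g ^ (Multiplicative.toAdd x).val = g ^ (Multiplicative.toAdd y).val := hxy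
    rw [pow_eq_pow_iff_modEq, hg] at hx1
    have hx : (Multiplicative.toAdd x).val < 12 := ZMod.val_lt _
    have hy : (Multiplicative.toAdd y).val < 12 := ZMod.val_lt _
    have : (Multiplicative.toAdd x).val = (Multiplicative.toAdd y).val := by
      unfold Nat.ModEq at hx1
      omega
    exact Multiplicative.toAdd.injective (ZMod.val_injective 12 this)
  have hbij : Function.Bijective f :=
    (Nat.bijective_iff_injective_and_card f).mpr ⟨hinj, by simp [h, Nat.card_eq_fintype_card]⟩
  exact ⟨(MulEquiv.ofBijective f hbij).symm⟩

private lemma mem_zpowers_two {G : Type*} [Group G] {b z : G} (hb : orderOf b = 2)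
    (hz : z ∈ zpowers b) : z = 1 ∨ z = b := by
  obtain ⟨k, rfl⟩ := hz
  simp only []
  rw [← zpow_mod_orderOf, hb]
  have h0 : (0:ℤ) ≤ k % 2 := Int.emod_nonneg k (by norm_num)
  have h2 : k % 2 < 2 := Int.emod_lt_of_pos k (by norm_num)
  interval_cases h : (k % (2:ℤ))
  · left; simp
  · right; simp

private lemma c2c6 {G : Type*} [Group G] (h : Nat.card G = 12) (a b : G)
    (ha : orderOf a = 6) (hb : orderOf b = 2) (hcomm : Commute a b)
    (hnm : b ∉ zpowers a) : Nonempty (G ≃* Multiplicative (ZMod 2 × ZMod 6)) := by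
  have : Finite G := Nat.finite_of_card_ne_zero (by omega)
  let f : Multiplicative (ZMod 2 × ZMod 6) →* G :=
    MonoidHom.mk' (fun x => b ^ (Multiplicative.toAdd x).1.val * a ^ (Multiplicative.toAdd x).2.val)
      (by
        intro p q
        simp only [toAdd_mul, Prod.fst_add, Prod.snd_add]
        rw [pow_zmod_val_add hb, pow_zmod_val_add ha]
        exact (hcomm.symm.pow_pow _ _).mul_mul_mul_comm _ _)
  have hinj : Function.Injective f := by
    intro x y hxy
    have E : b ^ (Multiplicative.toAdd x).1.val * a ^ (Multiplicative.toAdd x).2.val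
        = b ^ (Multiplicative.toAdd y).1.val * a ^ (Multiplicative.toAdd y).2.val := hxy
    set x1 := (Multiplicative.toAdd x).1 with hx1d
    set x2 := (Multiplicative.toAdd x).2
    set y1 := (Multiplicative.toAdd y).1
    set y2 := (Multiplicative.toAdd y).2
    have hw : (b ^ y1.val)⁻¹ * b ^ x1.val = a ^ y2.val * (a ^ x2.val)⁻¹ := by
      refine mul_left_cancel (a := b ^ y1.val) ?_
      refine mul_right_cancel (b := a ^ x2.val) ?_
      simpa [mul_assoc] using E
    have hwb : (b ^ y1.val)⁻¹ * b ^ x1.val ∈ zpowers b :=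
      mul_mem (inv_mem (pow_mem (mem_zpowers b) _)) (pow_mem (mem_zpowers b) _)
    have hwa : (b ^ y1.val)⁻¹ * b ^ x1.val ∈ zpowers a := by
      rw [hw]; exact mul_mem (pow_mem (mem_zpowers a) _) (inv_mem (pow_mem (mem_zpowers a) _))
    rcases mem_zpowers_two hb hwb with h1 | h1
    · -- w = 1
      have hbb : b ^ x1.val = b ^ y1.val := by
        rw [inv_mul_eq_one] at h1; exact h1.symm
      have haa : a ^ x2.val = a ^ y2.val := by
        rw [h1, eq_comm, mul_inv_eq_one] at hw; exact hw.symm ▸ hw.symm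
      rw [pow_eq_pow_iff_modEq, hb] at hbb
      rw [pow_eq_pow_iff_modEq, ha] at haa
      have e1 : x1 = y1 := ZMod.val_injective 2 (by
        have := ZMod.val_lt x1; have := ZMod.val_lt y1
        unfold Nat.ModEq at hbb; omega)
      have e2 : x2 = y2 := ZMod.val_injective 6 (by
        have := ZMod.val_lt x2; have := ZMod.val_lt y2
        unfold Nat.ModEq at haa; omega)
      apply Multiplicative.toAdd.injective
      exact Prod.ext e1 e2
    · exact absurd (h1 ▸ hwa) hnm
  have hbij : Function.Bijective f :=
    (Nat.bijective_iff_injective_and_card f).mpr ⟨hinj, by simp [h, Nat.card_eq_fintype_card]⟩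
  exact ⟨(MulEquiv.ofBijective f hbij).symm⟩

private lemma mem_zpowers_six_sq {G : Type*} [Group G] {a z : G} (ha : orderOf a = 6)
    (hz : z ∈ zpowers a) (hz2 : z * z = 1) : z = 1 ∨ z = a ^ (3:ℕ) := by
  obtain ⟨k, rfl⟩ := hz
  simp only [] at hz2 ⊢
  rw [← zpow_mod_orderOf, ha] at hz2 ⊢
  have h0 : (0:ℤ) ≤ k % (6:ℕ) := Int.emod_nonneg k (by norm_num)
  have h6 : k % ((6:ℕ):ℤ) < 6 := Int.emod_lt_of_pos k (by norm_num)
  rw [← zpow_add] at hz2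
  have hdvd : ((orderOf a : ℤ)) ∣ k % (6:ℕ) + k % (6:ℕ) := orderOf_dvd_iff_zpow_eq_one.mpr hz2
  rw [ha] at hdvd
  have : k % ((6:ℕ):ℤ) = 0 ∨ k % ((6:ℕ):ℤ) = 3 := by push_cast at hdvd h6 h0 ⊢; omega
  rcases this with h | h
  · left; rw [h]; simp
  · right; rw [h, show (3:ℤ) = ((3:ℕ):ℤ) by norm_num, zpow_natCast]

private lemma mem_zpowers_three {G : Type*} [Group G] {t z : G} (ht : orderOf t = 3)
    (hz : z ∈ zpowers t) : z = 1 ∨ z = t ∨ z = t * t := by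
  obtain ⟨k, rfl⟩ := hz
  simp only []
  rw [← zpow_mod_orderOf, ht]
  have h0 : (0:ℤ) ≤ k % 3 := Int.emod_nonneg k (by norm_num)
  have h3 : k % 3 < 3 := Int.emod_lt_of_pos k (by norm_num)
  interval_cases h : (k % (3:ℤ))
  · left; simp
  · right; left; simp
  · right; right
    rw [show (2:ℤ) = ((2:ℕ):ℤ) by norm_num, zpow_natCast, pow_two]

private lemma card_sylow_three {G : Type*} [Group G] [Finite G] (h : Nat.card G = 12)
    [Fact (Nat.Prime 3)] (P : Sylow 3 G) : Nat.card (P : Subgroup G) = 3 := by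
  rw [Sylow.card_eq_multiplicity, h]
  rw [show (12:ℕ) = 2^2*3 by norm_num, Nat.factorization_mul (by norm_num) (by norm_num),
    show (2:ℕ)^2 = 4 from rfl, show (4:ℕ) = 2^2 from rfl,
    Nat.Prime.factorization_pow (by norm_num : Nat.Prime 2),
    Nat.Prime.factorization (by norm_num : Nat.Prime 3)]
  simp [Finsupp.single_apply]

private lemma card_sylow_two {G : Type*} [Group G] [Finite G] (h : Nat.card G = 12)
    [Fact (Nat.Prime 2)] (Q : Sylow 2 G) : Nat.card (Q : Subgroup G) = 4 := by
  rw [Sylow.card_eq_multiplicity, h]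
  rw [show (12:ℕ) = 2^2*3 by norm_num, Nat.factorization_mul (by norm_num) (by norm_num),
    show (2:ℕ)^2 = 4 from rfl, show (4:ℕ) = 2^2 from rfl,
    Nat.Prime.factorization_pow (by norm_num : Nat.Prime 2),
    Nat.Prime.factorization (by norm_num : Nat.Prime 3)]
  simp [Finsupp.single_apply]

private lemma d12 {G : Type*} [Group G] (h : Nat.card G = 12) (r s : G) (hr : orderOf r = 6)
    (hs2 : s * s = 1) (hrel : s * r = r⁻¹ * s) :
    Nonempty (G ≃* DihedralGroup 6) := by
  have : Finite G := Nat.finite_of_card_ne_zero (by omega)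
  -- powers function
  have Fadd : ∀ i j : ZMod 6, r ^ (i + j).val = r ^ i.val * r ^ j.val :=
    pow_zmod_val_add hr
  have Fneg : ∀ i : ZMod 6, r ^ (-i).val = (r ^ i.val)⁻¹ := by
    intro i
    have h1 : r ^ i.val * r ^ (-i).val = 1 := by
      rw [← Fadd]; simp
    exact (inv_eq_of_mul_eq_one_right h1).symm
  have Fsub : ∀ i j : ZMod 6, r ^ (i - j).val = r ^ i.val * (r ^ j.val)⁻¹ := by
    intro i j
    rw [sub_eq_add_neg, Fadd, Fneg]
  -- conjugation
  have conj1 : ∀ k : ℕ, s * r ^ k = (r ^ k)⁻¹ * s := by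
    intro k
    induction k with
    | zero => simp
    | succ n ih =>
      rw [pow_succ, ← mul_assoc, ih, mul_assoc, hrel, mul_inv_rev]
      group
  have conj2 : ∀ k : ℕ, r ^ k * s = s * (r ^ k)⁻¹ := by
    intro k
    have := conj1 k
    calc r ^ k * s = s * (s * (r ^ k * s)) := by rw [← mul_assoc, ← mul_assoc, hs2, one_mul]
    _ = s * (((r ^ k)⁻¹ * s) * s) := by rw [← this, mul_assoc]
    _ = s * (r ^ k)⁻¹ := by rw [mul_assoc, hs2, mul_one]
  have hcp : ∀ i j : ZMod 6, Commute (r ^ i.val) ((r ^ j.val)⁻¹) :=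
    fun i j => ((Commute.refl r).pow_pow _ _).inv_right
  -- the homomorphism
  let fn : DihedralGroup 6 → G := fun x =>
    match x with
    | DihedralGroup.r i => r ^ i.val
    | DihedralGroup.sr i => s * r ^ i.val
  let f : DihedralGroup 6 →* G := {
    toFun := fn
    map_one' := by
      show r ^ (0 : ZMod 6).val = 1
      simp
    map_mul' := by
      rintro (i | i) (j | j)
      · show r ^ (i + j).val = r ^ i.val * r ^ j.val
        exact Fadd i j
      · show s * r ^ (j - i).val = r ^ i.val * (s * r ^ j.val)
        rw [Fsub]
        calc s * (r ^ j.val * (r ^ i.val)⁻¹)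
            = s * ((r ^ i.val)⁻¹ * r ^ j.val) := by rw [(hcp j i).eq]
          _ = (s * (r ^ i.val)⁻¹) * r ^ j.val := by rw [mul_assoc]
          _ = (r ^ i.val * s) * r ^ j.val := by rw [conj2]
          _ = r ^ i.val * (s * r ^ j.val) := by rw [mul_assoc]
      · show s * r ^ (i + j).val = (s * r ^ i.val) * r ^ j.val
        rw [Fadd, mul_assoc]
      · show r ^ (j - i).val = (s * r ^ i.val) * (s * r ^ j.val)
        rw [Fsub]
        calc r ^ j.val * (r ^ i.val)⁻¹
            = (r ^ i.val)⁻¹ * r ^ j.val := by rw [(hcp j i).eq]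
          _ = 1 * ((r ^ i.val)⁻¹ * r ^ j.val) := by rw [one_mul]
          _ = (s * s) * ((r ^ i.val)⁻¹ * r ^ j.val) := by rw [hs2]
          _ = s * ((s * (r ^ i.val)⁻¹) * r ^ j.val) := by group
          _ = s * ((r ^ i.val * s) * r ^ j.val) := by rw [conj2]
          _ = (s * r ^ i.val) * (s * r ^ j.val) := by group
  }
  -- surjectivity
  haveI : Fact (1 < 6) := ⟨by norm_num⟩
  have hrmem : r ∈ f.range := ⟨DihedralGroup.r 1, by
    show r ^ (1 : ZMod 6).val = r
    rw [ZMod.val_one]; exact pow_one r⟩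
  have hsmem : s ∈ f.range := ⟨DihedralGroup.sr 0, by
    show s * r ^ (0 : ZMod 6).val = s
    simp⟩
  have hr6 : (6:ℕ) ∣ Nat.card f.range := by
    have h6 : orderOf (⟨r, hrmem⟩ : f.range) = 6 := (Subgroup.orderOf_mk r hrmem).trans hr
    have := _root_.orderOf_dvd_natCard (⟨r, hrmem⟩ : f.range)
    rwa [h6] at this
  have hd12 : Nat.card f.range ∣ 12 := h ▸ Subgroup.card_subgroup_dvd_card _
  have hcards : Nat.card f.range = 6 ∨ Nat.card f.range = 12 := by
    rcases hr6 with ⟨c, hc⟩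
    have hle : Nat.card f.range ≤ 12 := Nat.le_of_dvd (by norm_num) hd12
    have hpos : 0 < Nat.card f.range := Nat.card_pos
    omega
  have hcard : Nat.card f.range = 12 := by
    rcases hcards with hc | hc
    · exfalso
      have hle : zpowers r ≤ f.range := zpowers_le.mpr hrmem
      have : zpowers r = f.range := by
        apply Subgroup.eq_of_le_of_card_ge hle
        rw [hc, Nat.card_zpowers, hr]
      have hsz : s ∈ zpowers r := this ▸ hsmem
      obtain ⟨k, hk⟩ := hsz
      simp only [] at hk
      have hcm : s * r = r * s := by
        rw [← hk]; exact ((Commute.refl r).zpow_left k).eq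
      rw [hrel] at hcm
      have hri : r⁻¹ = r := mul_right_cancel hcm
      have hrr : r ^ 2 = 1 := by
        rw [pow_two]; nth_rewrite 1 [← hri]; simp
      have := orderOf_dvd_of_pow_eq_one hrr
      rw [hr] at this
      exact absurd this (by norm_num)
    · exact hc
  have hsurj : Function.Surjective f := by
    rw [← MonoidHom.range_eq_top]
    exact Subgroup.eq_top_of_card_eq _ (by rw [hcard, h])
  have hbij : Function.Bijective f :=
    (Nat.bijective_iff_surjective_and_card f).mpr ⟨hsurj, by
      rw [DihedralGroup.nat_card, h]⟩
  exact ⟨(MulEquiv.ofBijective f hbij).symm⟩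

private lemma q12 {G : Type*} [Group G] (h : Nat.card G = 12) (r x : G) (hr : orderOf r = 6)
    (hx2 : x * x = r ^ (3:ℕ)) (hrel : x * r = r⁻¹ * x) :
    Nonempty (G ≃* QuaternionGroup 3) := by
  have : Finite G := Nat.finite_of_card_ne_zero (by omega)
  have hr' : orderOf r = 2 * 3 := hr
  have Fadd : ∀ i j : ZMod (2*3), r ^ (i + j).val = r ^ i.val * r ^ j.val :=
    pow_zmod_val_add hr'
  have Fneg : ∀ i : ZMod (2*3), r ^ (-i).val = (r ^ i.val)⁻¹ := by
    intro i
    have h1 : r ^ i.val * r ^ (-i).val = 1 := by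
      rw [← Fadd]; simp
    exact (inv_eq_of_mul_eq_one_right h1).symm
  have Fsub : ∀ i j : ZMod (2*3), r ^ (i - j).val = r ^ i.val * (r ^ j.val)⁻¹ := by
    intro i j
    rw [sub_eq_add_neg, Fadd, Fneg]
  have conj1 : ∀ k : ℕ, x * r ^ k = (r ^ k)⁻¹ * x := by
    intro k
    induction k with
    | zero => simp
    | succ n ih =>
      rw [pow_succ, ← mul_assoc, ih, mul_assoc, hrel, mul_inv_rev]
      group
  have conj2 : ∀ k : ℕ, r ^ k * x = x * (r ^ k)⁻¹ := by
    intro k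
    have h1 := conj1 k
    calc r ^ k * x = r ^ k * (x * r ^ k) * (r ^ k)⁻¹ := by group
    _ = r ^ k * ((r ^ k)⁻¹ * x) * (r ^ k)⁻¹ := by rw [h1]
    _ = x * (r ^ k)⁻¹ := by group
  have hcp : ∀ i j : ZMod (2*3), Commute (r ^ i.val) ((r ^ j.val)⁻¹) :=
    fun i j => ((Commute.refl r).pow_pow _ _).inv_right
  have hval3 : ((3:ℕ) : ZMod (2*3)).val = 3 := rfl
  let fn : QuaternionGroup 3 → G := fun g =>
    match g with
    | QuaternionGroup.a i => r ^ i.val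
    | QuaternionGroup.xa i => x * r ^ i.val
  let f : QuaternionGroup 3 →* G := {
    toFun := fn
    map_one' := by
      show r ^ (0 : ZMod (2*3)).val = 1
      simp
    map_mul' := by
      rintro (i | i) (j | j)
      · show r ^ (i + j).val = r ^ i.val * r ^ j.val
        exact Fadd i j
      · show x * r ^ (j - i).val = r ^ i.val * (x * r ^ j.val)
        rw [Fsub]
        calc x * (r ^ j.val * (r ^ i.val)⁻¹)
            = x * ((r ^ i.val)⁻¹ * r ^ j.val) := by rw [(hcp j i).eq]
          _ = (x * (r ^ i.val)⁻¹) * r ^ j.val := by rw [mul_assoc]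
          _ = (r ^ i.val * x) * r ^ j.val := by rw [conj2]
          _ = r ^ i.val * (x * r ^ j.val) := by rw [mul_assoc]
      · show x * r ^ (i + j).val = (x * r ^ i.val) * r ^ j.val
        rw [Fadd, mul_assoc]
      · show r ^ (((3:ℕ) : ZMod (2*3)) + j - i).val = (x * r ^ i.val) * (x * r ^ j.val)
        rw [Fsub, Fadd, hval3, ← hx2]
        calc x * x * r ^ j.val * (r ^ i.val)⁻¹
            = x * x * ((r ^ i.val)⁻¹ * r ^ j.val) := by
              rw [mul_assoc, (hcp j i).eq]
          _ = x * ((x * (r ^ i.val)⁻¹) * r ^ j.val) := by group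
          _ = x * ((r ^ i.val * x) * r ^ j.val) := by rw [conj2]
          _ = (x * r ^ i.val) * (x * r ^ j.val) := by group
  }
  haveI : Fact (1 < 2*3) := ⟨by norm_num⟩
  have hrmem : r ∈ f.range := ⟨QuaternionGroup.a 1, by
    show r ^ (1 : ZMod (2*3)).val = r
    rw [ZMod.val_one]; exact pow_one r⟩
  have hxmem : x ∈ f.range := ⟨QuaternionGroup.xa 0, by
    show x * r ^ (0 : ZMod (2*3)).val = x
    simp⟩
  have hr6 : (6:ℕ) ∣ Nat.card f.range := by
    have h6 : orderOf (⟨r, hrmem⟩ : f.range) = 6 := (Subgroup.orderOf_mk r hrmem).trans hr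
    have := _root_.orderOf_dvd_natCard (⟨r, hrmem⟩ : f.range)
    rwa [h6] at this
  have hd12 : Nat.card f.range ∣ 12 := h ▸ Subgroup.card_subgroup_dvd_card _
  have hcards : Nat.card f.range = 6 ∨ Nat.card f.range = 12 := by
    rcases hr6 with ⟨c, hc⟩
    have hle : Nat.card f.range ≤ 12 := Nat.le_of_dvd (by norm_num) hd12
    have hpos : 0 < Nat.card f.range := Nat.card_pos
    omega
  have hcard : Nat.card f.range = 12 := by
    rcases hcards with hc | hc
    · exfalso
      have hle : zpowers r ≤ f.range := zpowers_le.mpr hrmem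
      have : zpowers r = f.range := by
        apply Subgroup.eq_of_le_of_card_ge hle
        rw [hc, Nat.card_zpowers, hr]
      have hsz : x ∈ zpowers r := this ▸ hxmem
      obtain ⟨k, hk⟩ := hsz
      simp only [] at hk
      have hcm : x * r = r * x := by
        rw [← hk]; exact ((Commute.refl r).zpow_left k).eq
      rw [hrel] at hcm
      have hri : r⁻¹ = r := mul_right_cancel hcm
      have hrr : r ^ 2 = 1 := by
        rw [pow_two]; nth_rewrite 1 [← hri]; simp
      have := orderOf_dvd_of_pow_eq_one hrr
      rw [hr] at this
      exact absurd this (by norm_num)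
    · exact hc
  have hsurj : Function.Surjective f := by
    rw [← MonoidHom.range_eq_top]
    exact Subgroup.eq_top_of_card_eq _ (by rw [hcard, h])
  have hbij : Function.Bijective f :=
    (Nat.bijective_iff_surjective_and_card f).mpr ⟨hsurj, by
      rw [Nat.card_eq_fintype_card, QuaternionGroup.card, h]⟩
  exact ⟨(MulEquiv.ofBijective f hbij).symm⟩

private def permMulCongr {α β : Type*} (e : α ≃ β) : Equiv.Perm α ≃* Equiv.Perm β where
  toEquiv := e.permCongr
  map_mul' := by
    intro p q
    ext b
    simp [Equiv.permCongr_apply, Equiv.Perm.mul_apply]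

-- generator of a subgroup of prime order

private lemma exists_zpowers_eq {G : Type*} [Group G] (H : Subgroup G) (p : ℕ)
    (hp : p.Prime) (hH : Nat.card H = p) [Finite G] :
    ∃ t : G, t ∈ H ∧ orderOf t = p ∧ zpowers t = H := by
  haveI : Fact p.Prime := ⟨hp⟩
  haveI : IsCyclic H := isCyclic_of_prime_card hH
  obtain ⟨g, hg⟩ := IsCyclic.exists_generator (α := H)
  refine ⟨(g : G), g.2, ?_, ?_⟩
  · rw [Subgroup.orderOf_coe g, orderOf_eq_card_of_forall_mem_zpowers hg, hH]
  · apply Subgroup.eq_of_le_of_card_ge (zpowers_le.mpr g.2)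
    rw [hH, Nat.card_zpowers, Subgroup.orderOf_coe g,
      orderOf_eq_card_of_forall_mem_zpowers hg, hH]

private lemma a4 {G : Type*} [Group G] (h : Nat.card G = 12)
    (hc4 : Nat.card (Sylow 3 G) = 4) : Nonempty (G ≃* alternatingGroup (Fin 4)) := by
  have hfin : Finite G := Nat.finite_of_card_ne_zero (by omega)
  haveI : Fact (Nat.Prime 3) := ⟨by norm_num⟩
  -- every Sylow 3-subgroup has cardinality 3
  have hcardP : ∀ P : Sylow 3 G, Nat.card (P : Subgroup G) = 3 := by
    intro P
    rw [Sylow.card_eq_multiplicity, h]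
    rw [show (12:ℕ) = 2^2*3 by norm_num, Nat.factorization_mul (by norm_num) (by norm_num),
      show (2:ℕ)^2 = 4 from rfl, show (4:ℕ) = 2^2 from rfl,
      Nat.Prime.factorization_pow (by norm_num : Nat.Prime 2),
      Nat.Prime.factorization (by norm_num : Nat.Prime 3)]
    simp [Finsupp.single_apply]
  -- normalizers are the Sylows themselves
  have hnorm : ∀ P : Sylow 3 G, (Subgroup.normalizer (P : Set G)) = (P : Subgroup G) := by
    intro P
    have hidx : (Subgroup.normalizer (P : Set G)).index = 4 := by
      rw [← Sylow.card_eq_index_normalizer, hc4]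
    have hcn : Nat.card (Subgroup.normalizer (P : Set G)) = 3 := by
      have := Subgroup.card_mul_index (Subgroup.normalizer (P : Set G))
      rw [hidx, h] at this
      omega
    exact (Subgroup.eq_of_le_of_card_ge Subgroup.le_normalizer
      (le_of_eq (hcn.trans (hcardP P).symm))).symm
  -- two distinct Sylow subgroups
  haveI : Fintype (Sylow 3 G) := Fintype.ofFinite _
  haveI : Nontrivial (Sylow 3 G) := by
    apply Fintype.one_lt_card_iff_nontrivial.mp
    rw [← Nat.card_eq_fintype_card]
    omega
  obtain ⟨P1, P2, hP12⟩ := exists_pair_ne (Sylow 3 G)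
  have hP12' : (P1 : Subgroup G) ≠ (P2 : Subgroup G) := fun hh => hP12 (Sylow.ext hh)
  have hinf : (P1 : Subgroup G) ⊓ (P2 : Subgroup G) = ⊥ := by
    have hd : Nat.card ((P1 : Subgroup G) ⊓ (P2 : Subgroup G) : Subgroup G) ∣ 3 := by
      have := Subgroup.card_dvd_of_le (inf_le_left (a := (P1 : Subgroup G)) (b := (P2 : Subgroup G)))
      rwa [hcardP P1] at this
    rcases (Nat.Prime.eq_one_or_self_of_dvd (by norm_num) _ hd) with hone | hthree
    · exact Subgroup.card_eq_one.mp hone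
    · exfalso
      have h1 : (P1 : Subgroup G) ⊓ (P2 : Subgroup G) = (P1 : Subgroup G) :=
        Subgroup.eq_of_le_of_card_ge inf_le_left (by rw [hthree, hcardP])
      have h2 : (P1 : Subgroup G) ⊓ (P2 : Subgroup G) = (P2 : Subgroup G) :=
        Subgroup.eq_of_le_of_card_ge inf_le_right (by rw [hthree, hcardP])
      exact hP12' (h1.symm.trans h2)
  -- the conjugation action on Sylow subgroups
  let φ : G →* Equiv.Perm (Sylow 3 G) := MulAction.toPermHom G (Sylow 3 G)
  have hker : φ.ker = ⊥ := by
    rw [eq_bot_iff]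
    intro g hg
    have hfix : ∀ P : Sylow 3 G, g • P = P := by
      intro P
      have : φ g = 1 := hg
      have := congrArg (fun σ : Equiv.Perm (Sylow 3 G) => σ P) this
      simpa [φ, MulAction.toPermHom] using this
    have hmem : ∀ P : Sylow 3 G, g ∈ (P : Subgroup G) := by
      intro P
      have := Sylow.smul_eq_iff_mem_normalizer.mp (hfix P)
      rwa [hnorm P] at this
    have : g ∈ (P1 : Subgroup G) ⊓ (P2 : Subgroup G) := ⟨hmem P1, hmem P2⟩
    rwa [hinf] at this
  have hφinj : Function.Injective φ := by
    rw [← MonoidHom.ker_eq_bot_iff] at *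
    exact hker
  -- transport to Perm (Fin 4)
  have e : Sylow 3 G ≃ Fin 4 :=
    Fintype.equivFinOfCardEq (by rw [← Nat.card_eq_fintype_card, hc4])
  let ψ : G →* Equiv.Perm (Fin 4) := (permMulCongr e).toMonoidHom.comp φ
  have hψinj : Function.Injective ψ := (permMulCongr e).injective.comp hφinj
  -- all values of ψ are even
  have horder3 : ∀ g : G, g ^ (3:ℕ) = 1 → Equiv.Perm.sign (ψ g) = 1 := by
    intro g hg
    have h3 : (ψ g) ^ (3:ℕ) = 1 := by rw [← map_pow, hg, map_one]
    set u := Equiv.Perm.sign (ψ g) with hu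
    have hu3 : u ^ (3:ℕ) = 1 := by rw [hu, ← map_pow, h3, map_one]
    have hu2 : u ^ (2:ℕ) = 1 := Int.units_sq u
    calc u = u ^ (3:ℕ) * (u ^ (2:ℕ))⁻¹ := by group
    _ = 1 := by rw [hu3, hu2]; simp
  have hsgn : ∀ g : G, Equiv.Perm.sign (ψ g) = 1 := by
    by_contra hcon
    push_neg at hcon
    obtain ⟨g0, hg0⟩ := hcon
    -- the kernel of sign ∘ ψ has order 6
    set χ : G →* ℤˣ := (Equiv.Perm.sign).comp ψ with hχ
    have hrange : Nat.card χ.range = 2 := by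
      have hdvd : Nat.card χ.range ∣ 2 := by
        have := Subgroup.card_subgroup_dvd_card (χ.range)
        rwa [show Nat.card ℤˣ = 2 by
          rw [Nat.card_eq_fintype_card, Fintype.card_units_int]] at this
      have hne1 : Nat.card χ.range ≠ 1 := by
        intro h1
        have := Subgroup.card_eq_one.mp h1
        have hg0r : χ g0 ∈ χ.range := ⟨g0, rfl⟩
        rw [this] at hg0r
        exact hg0 (Subgroup.mem_bot.mp hg0r)
      rcases (Nat.Prime.eq_one_or_self_of_dvd Nat.prime_two _ hdvd) with h1 | h2
      · exact absurd h1 hne1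
      · exact h2
    have hkidx : χ.ker.index = 2 := by rw [Subgroup.index_ker, hrange]
    have hkcard : Nat.card χ.ker = 6 := by
      have := Subgroup.card_mul_index χ.ker
      rw [hkidx, h] at this
      omega
    -- both Sylows are inside the kernel
    have hPK : ∀ P : Sylow 3 G, (P : Subgroup G) ≤ χ.ker := by
      intro P g hg
      have : orderOf g ∣ 3 := by
        rw [← hcardP P, ← Subgroup.orderOf_mk g hg]
        exact orderOf_dvd_natCard _
      have hg3 : g ^ (3:ℕ) = 1 := by
        rcases this with ⟨c, hc⟩
        calc g ^ (3:ℕ) = (g ^ orderOf g) ^ c := by rw [← pow_mul, ← hc]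
        _ = 1 := by rw [pow_orderOf_eq_one]; simp
      exact horder3 g hg3
    -- generators of the two Sylows
    obtain ⟨t1, ht1m, ht1o, ht1z⟩ := exists_zpowers_eq (P1 : Subgroup G) 3 (by norm_num) (hcardP P1)
    obtain ⟨t2, ht2m, ht2o, ht2z⟩ := exists_zpowers_eq (P2 : Subgroup G) 3 (by norm_num) (hcardP P2)
    -- an injection (ZMod 3 × ZMod 3) ↪ ker
    have hinj9 : Function.Injective (fun p : ZMod 3 × ZMod 3 =>
        (⟨t1 ^ p.1.val * t2 ^ p.2.val,
          mul_mem (hPK P1 (pow_mem ht1m _)) (hPK P2 (pow_mem ht2m _))⟩ : χ.ker)) := by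
      intro p q hpq
      have E : t1 ^ p.1.val * t2 ^ p.2.val = t1 ^ q.1.val * t2 ^ q.2.val :=
        congrArg Subtype.val hpq
      have hw : (t1 ^ q.1.val)⁻¹ * t1 ^ p.1.val = t2 ^ q.2.val * (t2 ^ p.2.val)⁻¹ := by
        refine mul_left_cancel (a := t1 ^ q.1.val) ?_
        refine mul_right_cancel (b := t2 ^ p.2.val) ?_
        simpa [mul_assoc] using E
      have hw1 : (t1 ^ q.1.val)⁻¹ * t1 ^ p.1.val ∈ (P1 : Subgroup G) :=
        mul_mem (inv_mem (pow_mem ht1m _)) (pow_mem ht1m _)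
      have hw2 : (t1 ^ q.1.val)⁻¹ * t1 ^ p.1.val ∈ (P2 : Subgroup G) := by
        rw [hw]; exact mul_mem (pow_mem ht2m _) (inv_mem (pow_mem ht2m _))
      have hwbot : (t1 ^ q.1.val)⁻¹ * t1 ^ p.1.val = 1 := by
        have : (t1 ^ q.1.val)⁻¹ * t1 ^ p.1.val ∈ (P1 : Subgroup G) ⊓ (P2 : Subgroup G) :=
          ⟨hw1, hw2⟩
        rwa [hinf, Subgroup.mem_bot] at this
      have h1 : t1 ^ p.1.val = t1 ^ q.1.val := by
        rw [inv_mul_eq_one] at hwbot; exact hwbot.symm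
      have h2 : t2 ^ p.2.val = t2 ^ q.2.val := by
        rw [hwbot, eq_comm, mul_inv_eq_one] at hw; exact hw.symm
      rw [pow_eq_pow_iff_modEq, ht1o] at h1
      rw [pow_eq_pow_iff_modEq, ht2o] at h2
      have e1 : p.1 = q.1 := ZMod.val_injective 3 (by
        have := ZMod.val_lt p.1; have := ZMod.val_lt q.1
        unfold Nat.ModEq at h1; omega)
      have e2 : p.2 = q.2 := ZMod.val_injective 3 (by
        have := ZMod.val_lt p.2; have := ZMod.val_lt q.2
        unfold Nat.ModEq at h2; omega)
      exact Prod.ext e1 e2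
    have h9 : (9:ℕ) ≤ 6 := by
      have := Nat.card_le_card_of_injective _ hinj9
      rwa [hkcard, show Nat.card (ZMod 3 × ZMod 3) = 9 by
        simp [Nat.card_eq_fintype_card]] at this
    omega
  -- the range of ψ is the alternating group
  have hle : ψ.range ≤ alternatingGroup (Fin 4) := by
    rintro - ⟨g, rfl⟩
    exact Equiv.Perm.mem_alternatingGroup.mpr (hsgn g)
  have hrcard : Nat.card ψ.range = 12 := by
    rw [Nat.card_congr (MonoidHom.ofInjective hψinj).toEquiv.symm, h]
  have hacard : Nat.card (alternatingGroup (Fin 4)) = 12 := by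
    have := two_mul_card_alternatingGroup (α := Fin 4)
    rw [Fintype.card_perm, Fintype.card_fin, show Nat.factorial 4 = 24 from rfl] at this
    rw [Nat.card_eq_fintype_card]
    omega
  have hrange : ψ.range = alternatingGroup (Fin 4) :=
    Subgroup.eq_of_le_of_card_ge hle (by rw [hrcard, hacard])
  exact ⟨(MonoidHom.ofInjective hψinj).trans (MulEquiv.subgroupCongr hrange)⟩


/-- Every group of order 12 is isomorphic to `C₁₂`, `C₂ × C₆`, `D₁₂` (dihedral of
order 12), `A₄`, or the dicyclic group `Q₁₂` of order 12. -/
theorem group_of_order_twelve_classification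
    (G : Type*) [Group G] (h : Nat.card G = 12) :
    Nonempty (G ≃* Multiplicative (ZMod 12)) ∨
    Nonempty (G ≃* Multiplicative (ZMod 2 × ZMod 6)) ∨
    Nonempty (G ≃* DihedralGroup 6) ∨
    Nonempty (G ≃* alternatingGroup (Fin 4)) ∨
    Nonempty (G ≃* QuaternionGroup 3) := by
  have hfin : Finite G := Nat.finite_of_card_ne_zero (by omega)
  haveI : Fact (Nat.Prime 3) := ⟨by norm_num⟩
  haveI : Fact (Nat.Prime 2) := ⟨by norm_num⟩
  by_cases h12 : ∃ g : G, orderOf g = 12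
  · obtain ⟨g, hg⟩ := h12
    exact Or.inl (cyc12 h g hg)
  push_neg at h12
  obtain ⟨P⟩ : Nonempty (Sylow 3 G) := inferInstance
  have hcardP : Nat.card (P : Subgroup G) = 3 := card_sylow_three h P
  by_cases hn : (P : Subgroup G).Normal
  swap
  · -- non-normal Sylow 3: A₄
    have hidx : (P : Subgroup G).index = 4 := by
      have := Subgroup.card_mul_index (P : Subgroup G)
      rw [hcardP, h] at this
      omega
    have hdvd : Nat.card (Sylow 3 G) ∣ 4 := hidx ▸ P.card_dvd_index
    have hmod : Nat.card (Sylow 3 G) % 3 = 1 := by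
      have := card_sylow_modEq_one 3 G
      unfold Nat.ModEq at this
      omega
    have hpos : 1 ≤ Nat.card (Sylow 3 G) := Nat.one_le_iff_ne_zero.mpr (by
      intro h0
      exact absurd (h0 ▸ hmod) (by norm_num))
    have hle4 : Nat.card (Sylow 3 G) ≤ 4 := Nat.le_of_dvd (by norm_num) hdvd
    have hc4 : Nat.card (Sylow 3 G) = 4 := by
      interval_cases hcc : (Nat.card (Sylow 3 G))
      · exfalso
        -- unique Sylow would be normal
        have hidxn : (Subgroup.normalizer (P : Set G)).index = 1 := by
          rw [← Sylow.card_eq_index_normalizer, hcc]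
        have : (Subgroup.normalizer (P : Set G)) = ⊤ := Subgroup.index_eq_one.mp hidxn
        exact hn (Subgroup.normalizer_eq_top_iff.mp this)
      · exact absurd hmod (by norm_num)
      · exact absurd hdvd (by norm_num)
      · rfl
    exact Or.inr (Or.inr (Or.inr (Or.inl (a4 h hc4))))
  · -- normal Sylow 3
    obtain ⟨t, htm, hto, htz⟩ := exists_zpowers_eq (P : Subgroup G) 3 (by norm_num) hcardP
    have ht1 : t ≠ 1 := by
      intro hh
      rw [hh, orderOf_one] at hto
      norm_num at hto
    have ht3 : t ^ (3:ℕ) = 1 := by rw [← hto]; exact pow_orderOf_eq_one t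
    have htri : ∀ g : G, g * t * g⁻¹ = t ∨ g * t * g⁻¹ = t * t := by
      intro g
      have hmem : g * t * g⁻¹ ∈ zpowers t := by
        rw [htz]; exact hn.conj_mem t htm g
      rcases mem_zpowers_three hto hmem with h1 | h2 | h3
      · exfalso
        apply ht1
        calc t = g⁻¹ * (g * t * g⁻¹) * g := by group
        _ = 1 := by rw [h1]; group
      · exact Or.inl h2
      · exact Or.inr h3
    obtain ⟨Q⟩ : Nonempty (Sylow 2 G) := inferInstance
    have hcardQ : Nat.card (Q : Subgroup G) = 4 := card_sylow_two h Q
    haveI : DecidableEq ((Q : Subgroup G) : Type _) := Classical.decEq _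
    have ht3' : t * t * t = 1 := by rw [← ht3]; simp [pow_succ, mul_assoc]
    have hti : t⁻¹ = t * t := inv_eq_of_mul_eq_one_right (by rw [← mul_assoc]; exact ht3')
    by_cases hx4 : ∃ x ∈ (Q : Subgroup G), orderOf x = 4
    · -- cyclic Sylow 2
      obtain ⟨x, hxQ, hxo⟩ := hx4
      rcases htri x with hc | hc
      · -- commuting: order 12 element, contradiction
        exfalso
        have hcomm : Commute t x := by
          have : x * t = t * x := by
            calc x * t = (x * t * x⁻¹) * x := by group
            _ = t * x := by rw [hc]
          exact this.symm
        have := hcomm.orderOf_mul_eq_mul_orderOf_of_coprime (by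
          rw [hto, hxo]; norm_num)
        rw [hto, hxo] at this
        exact h12 (t * x) this
      · -- dicyclic
        have hxt : x * t = (t * t) * x := by
          calc x * t = (x * t * x⁻¹) * x := by group
          _ = (t * t) * x := by rw [hc]
        have hx4' : x ^ (4:ℕ) = 1 := by rw [← hxo]; exact pow_orderOf_eq_one x
        have hz1 : x * x ≠ 1 := by
          intro hh
          have : orderOf x ∣ 2 := orderOf_dvd_of_pow_eq_one (by rw [pow_two]; exact hh)
          rw [hxo] at this
          exact absurd this (by norm_num)
        have hzz : (x * x) * (x * x) = 1 := by
          have h4 : x ^ (4:ℕ) = (x*x)*(x*x) := by simp [pow_succ, mul_assoc]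
          rw [← h4]; exact hx4'
        have hzo : orderOf (x * x) = 2 := orderOf_eq_prime (by rw [pow_two]; exact hzz) hz1
        have hzt : (x * x) * t = t * (x * x) := by
          have step : x * (x * t) = x * ((t * t) * x) := by rw [hxt]
          calc (x * x) * t = x * (x * t) := by group
          _ = x * ((t * t) * x) := step
          _ = (x * t) * (t * x) := by group
          _ = ((t*t)*x) * (t * x) := by rw [hxt]
          _ = (t*t) * (x * t) * x := by group
          _ = (t*t) * ((t*t)*x) * x := by rw [hxt]
          _ = (t * t * t) * (t * (x * x)) := by group
          _ = t * (x * x) := by rw [ht3', one_mul]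
        have hcomm : Commute t (x * x) := hzt.symm
        have hro : orderOf (t * (x * x)) = 6 := by
          have := hcomm.orderOf_mul_eq_mul_orderOf_of_coprime (by
            rw [hto, hzo]; norm_num)
          rw [hto, hzo] at this
          exact this
        have hr3 : x * x = (t * (x * x)) ^ (3:ℕ) := by
          rw [hcomm.mul_pow, ht3, one_mul]
          have : (x*x) ^ (3:ℕ) = ((x*x)*(x*x)) * (x*x) := by simp [pow_succ, mul_assoc]
          rw [this, hzz, one_mul]
        have hzi : (x * x)⁻¹ = x * x := inv_eq_of_mul_eq_one_right hzz
        have hrinv : (t * (x * x))⁻¹ = (t * t) * (x * x) := by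
          rw [mul_inv_rev, hti, hzi]
          calc (x*x) * (t * t) = ((x*x) * t) * t := by group
          _ = (t * (x*x)) * t := by rw [hzt]
          _ = t * ((x*x) * t) := by group
          _ = t * (t * (x*x)) := by rw [hzt]
          _ = (t * t) * (x*x) := by group
        have hrel : x * (t * (x * x)) = (t * (x * x))⁻¹ * x := by
          rw [hrinv]
          calc x * (t * (x * x)) = (x * t) * (x * x) := by group
          _ = ((t * t) * x) * (x * x) := by rw [hxt]
          _ = (t * t) * (x * x) * x := by group
        exact Or.inr (Or.inr (Or.inr (Or.inr (q12 h (t * (x * x)) x hro hr3 hrel))))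
    · -- Klein four Sylow 2
      push_neg at hx4
      have hq2 : ∀ q ∈ (Q : Subgroup G), q * q = 1 := by
        intro q hq
        have hdq : orderOf q ∣ 4 := by
          have := _root_.orderOf_dvd_natCard (⟨q, hq⟩ : (Q : Subgroup G))
          rw [hcardQ, Subgroup.orderOf_mk] at this
          exact this
        have hne : orderOf q ≠ 4 := hx4 q hq
        have : orderOf q ∣ 2 := by
          obtain ⟨i, hi, hh⟩ := (Nat.dvd_prime_pow Nat.prime_two).mp
            (show orderOf q ∣ 2^2 from hdq)
          interval_cases i
          · rw [hh]; exact one_dvd 2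
          · rw [hh, pow_one]
          · exact absurd hh (by simpa using hne)
        rw [← pow_two]
        exact orderOf_dvd_iff_pow_eq_one.mp this
      -- Q is abelian
      have hQab : ∀ a b : G, a ∈ (Q : Subgroup G) → b ∈ (Q : Subgroup G) → a * b = b * a := by
        intro a b ha hb
        have hab : (a * b) * (a * b) = 1 := hq2 _ (mul_mem ha hb)
        have hia : a⁻¹ = a := inv_eq_of_mul_eq_one_right (hq2 a ha)
        have hib : b⁻¹ = b := inv_eq_of_mul_eq_one_right (hq2 b hb)
        calc a * b = (a * b)⁻¹ := (inv_eq_of_mul_eq_one_right hab).symm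
        _ = b⁻¹ * a⁻¹ := by rw [mul_inv_rev]
        _ = b * a := by rw [hia, hib]
      haveI : Fintype (Q : Subgroup G) := Fintype.ofFinite _
      have hfq : Fintype.card (Q : Subgroup G) = 4 := by
        rw [← Nat.card_eq_fintype_card, hcardQ]
      by_cases hcent : ∀ q ∈ (Q : Subgroup G), q * t = t * q
      · -- abelian: C₂ × C₆
        have hS : 1 < (Finset.univ.erase (1 : (Q : Subgroup G))).card := by
          rw [Finset.card_erase_of_mem (Finset.mem_univ _), Finset.card_univ, hfq]
          norm_num
        obtain ⟨u, huS, v, hvS, huv⟩ := Finset.one_lt_card.mp hS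
        have hu1 : (u : G) ≠ 1 := by
          intro hh
          exact (Finset.ne_of_mem_erase huS) (Subtype.ext hh)
        have hv1 : (v : G) ≠ 1 := by
          intro hh
          exact (Finset.ne_of_mem_erase hvS) (Subtype.ext hh)
        have huvne : (u : G) ≠ (v : G) := fun hh => huv (Subtype.coe_injective hh)
        have huo : orderOf (u : G) = 2 := orderOf_eq_prime
          (by rw [pow_two]; exact hq2 _ u.2) hu1
        have hvo : orderOf (v : G) = 2 := orderOf_eq_prime
          (by rw [pow_two]; exact hq2 _ v.2) hv1
        have hcomm_tu : Commute t (u : G) := by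
          unfold Commute SemiconjBy
          exact (hcent _ u.2).symm
        have ha : orderOf (t * (u:G)) = 6 := by
          have := hcomm_tu.orderOf_mul_eq_mul_orderOf_of_coprime (by
            rw [hto, huo]; norm_num)
          rw [hto, huo] at this
          exact this
        have hcomm_ab : Commute (t * (u:G)) (v : G) := by
          have h1 : Commute t (v:G) := by
            unfold Commute SemiconjBy
            exact (hcent _ v.2).symm
          have h2 : Commute (u:G) (v:G) := hQab _ _ u.2 v.2
          exact h1.mul_left h2
        have hnm : (v : G) ∉ zpowers (t * (u:G)) := by
          intro hmem
          rcases mem_zpowers_six_sq ha hmem (hq2 _ v.2) with h1 | h2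
          · exact hv1 h1
          · apply huvne
            have ha3 : (t * (u:G)) ^ (3:ℕ) = (u : G) := by
              rw [hcomm_tu.mul_pow, ht3, one_mul]
              have : ((u:G)) ^ (3:ℕ) = ((u:G) * u) * u := by simp [pow_succ, mul_assoc]
              rw [this, hq2 _ u.2, one_mul]
            rw [ha3] at h2
            exact h2.symm
        exact Or.inr (Or.inl (c2c6 h (t * (u:G)) (v:G) ha hvo hcomm_ab hnm))
      · -- nonabelian: D₁₂
        push_neg at hcent
        obtain ⟨s, hsQ, hst⟩ := hcent
        have hsc : s * t * s⁻¹ = t * t := by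
          rcases htri s with h1 | h2
          · exfalso
            apply hst
            calc s * t = (s * t * s⁻¹) * s := by group
            _ = t * s := by rw [h1]
          · exact h2
        have hs1 : s ≠ 1 := by
          intro hh
          apply hst
          rw [hh, one_mul, mul_one]
        have hss : s * s = 1 := hq2 s hsQ
        -- find a commuting involution y in Q distinct from 1
        have hyex : ∃ y : G, y ∈ (Q : Subgroup G) ∧ y ≠ 1 ∧ y * t = t * y := by
          have hsmem : (⟨s, hsQ⟩ : (Q : Subgroup G)) ∈ Finset.univ.erase (1 : (Q : Subgroup G)) := by
            apply Finset.mem_erase.mpr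
            exact ⟨fun hh => hs1 (congrArg Subtype.val hh), Finset.mem_univ _⟩
          have hS : 0 < ((Finset.univ.erase (1 : (Q : Subgroup G))).erase ⟨s, hsQ⟩).card := by
            rw [Finset.card_erase_of_mem hsmem, Finset.card_erase_of_mem (Finset.mem_univ _),
              Finset.card_univ, hfq]
            norm_num
          obtain ⟨w, hw⟩ := Finset.card_pos.mp hS
          obtain ⟨hws, hw1'⟩ := Finset.mem_erase.mp hw
          have hw1 : (w : G) ≠ 1 := fun hh => (Finset.ne_of_mem_erase hw1') (Subtype.ext hh)
          have hwsne : (w : G) ≠ s := fun hh => hws (Subtype.coe_injective hh)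
          rcases htri (w : G) with h1 | h2
          · exact ⟨w, w.2, hw1, by
              calc (w:G) * t = ((w:G) * t * (w:G)⁻¹) * w := by group
              _ = t * w := by rw [h1]⟩
          · refine ⟨s * w, mul_mem hsQ w.2, ?_, ?_⟩
            · intro hh
              apply hwsne
              have h1 : s⁻¹ = (w : G) := inv_eq_of_mul_eq_one_right hh
              have h2 : s⁻¹ = s := inv_eq_of_mul_eq_one_right hss
              rw [← h1, h2]
            · -- (s*w) commutes with t
              have hconj : (s * w) * t * (s * w)⁻¹ = t := by
                calc (s * w) * t * (s * w)⁻¹ = s * ((w:G) * t * (w:G)⁻¹) * s⁻¹ := by group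
                _ = s * (t * t) * s⁻¹ := by rw [h2]
                _ = (s * t * s⁻¹) * (s * t * s⁻¹) := by group
                _ = (t * t) * (t * t) := by rw [hsc]
                _ = t * (t * t * t) := by group
                _ = t := by rw [ht3', mul_one]
              calc (s * w) * t = ((s * w) * t * (s * w)⁻¹) * (s * w) := by group
              _ = t * (s * w) := by rw [hconj]
        obtain ⟨y, hyQ, hy1, hyt⟩ := hyex
        have hyy : y * y = 1 := hq2 y hyQ
        have hyo : orderOf y = 2 := orderOf_eq_prime (by rw [pow_two]; exact hyy) hy1
        have hro : orderOf (t * y) = 6 := by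
          have hcty : Commute t y := by
            unfold Commute SemiconjBy
            exact hyt.symm
          have := hcty.orderOf_mul_eq_mul_orderOf_of_coprime (by rw [hto, hyo]; norm_num)
          rw [hto, hyo] at this
          exact this
        have hrel : s * (t * y) = (t * y)⁻¹ * s := by
          have hsy : s * y = y * s := hQab s y hsQ hyQ
          have hyi : y⁻¹ = y := inv_eq_of_mul_eq_one_right hyy
          have hrinv : (t * y)⁻¹ = (t * t) * y := by
            rw [mul_inv_rev, hti, hyi]
            calc y * (t * t) = (y * t) * t := by group
            _ = (t * y) * t := by rw [hyt]
            _ = t * (y * t) := by group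
            _ = t * (t * y) := by rw [hyt]
            _ = t * t * y := by group
          rw [hrinv]
          calc s * (t * y) = (s * t * s⁻¹) * (s * y) := by group
          _ = (t * t) * (s * y) := by rw [hsc]
          _ = (t * t) * (y * s) := by rw [hsy]
          _ = (t * t) * y * s := by group
        exact Or.inr (Or.inr (Or.inl (d12 h (t * y) s hro hss hrel)))
end
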